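/- Fix h > 0, T = 3, X_t = [0,h] ⊆ ℝ for t = 0,…,3, U = {−h, 0, h} ⊆ ℝ. Define, for t₀ ∈ {0,…,3}, J_{t₀}(u,x) = Σ_{s=t₀}^{2} c_s(u(s)) + max_{t₀≤s≤3} x(s) with c_0(u) = −u, c_1(u) = u, c_2(u) = −u/2. Then there do NOT exist representation maps φ_3 : X_3 → ℝ and φ_t : X_t × U × Image(φ_{t+1}) → ℝ (t = 0,1,2), each monotone in its third argument, such that for every t₀ ∈ {0,…,3} the tail cost satisfies J_{t₀}(u,x) = φ_{t₀}(x(t₀),u(t₀), φ_{t₀+1}(x(t₀+1),u(t₀+1), …, φ_3(x(3))…)); i.e. the function J of the form Σ_t c_t(u(t)) + max_t d(x(t)) is not (as a nested family) monotonically backward separable. -/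

import Mathlib

open Set Filter MeasureTheory

/-- `nest φ φT u x t k` is the backward composition of representation maps
`φ t (x t) (u t) (φ (t+1) (x (t+1)) (u (t+1)) (… (φT (x (t+k))) …)))`
with `k` composition steps, terminating at time `t + k`. -/
def nest {α β : Type*} (φ : ℕ → α → β → ℝ → ℝ) (φT : α → ℝ)
    (u : ℕ → β) (x : ℕ → α) : ℕ → ℕ → ℝ
  | t, 0 => φT (x t)
  | t, k + 1 => φ t (x t) (u t) (nest φ φT u x (t + 1) k)

/-- `imSet φ φT X U t k` is the image of the representation map at time `t`
over its domain, where `k` is the number of remaining steps until the terminal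
time `t + k` (so `Image φ_t = imSet φ φT X U t (T - t)` when the horizon is `T`). -/
def imSet {α β : Type*} (φ : ℕ → α → β → ℝ → ℝ) (φT : α → ℝ)
    (X : ℕ → Set α) (U : Set β) : ℕ → ℕ → Set ℝ
  | t, 0 => φT '' X t
  | t, k + 1 =>
      {z | ∃ a ∈ X t, ∃ b ∈ U, ∃ w ∈ imSet φ φT X U (t + 1) k, z = φ t a b w}

/-- `J` is represented on its domain by the representation maps `φ, φT`
(backward composition with horizon `T`). -/
def IsRep {α β : Type*} (T : ℕ) (X : ℕ → Set α) (U : Set β)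
    (J : (ℕ → β) → (ℕ → α) → ℝ) (φ : ℕ → α → β → ℝ → ℝ) (φT : α → ℝ) : Prop :=
  ∀ u x, (∀ t, t < T → u t ∈ U) → (∀ t, t ≤ T → x t ∈ X t) →
    J u x = nest φ φT u x 0 T

/-- each representation map is monotone in its third argument on the image of
the next representation map. -/
def MonoRep {α β : Type*} (T : ℕ) (X : ℕ → Set α) (U : Set β)
    (φ : ℕ → α → β → ℝ → ℝ) (φT : α → ℝ) : Prop :=
  ∀ t, t < T → ∀ a ∈ X t, ∀ b ∈ U,
    ∀ z ∈ imSet φ φT X U (t + 1) (T - (t + 1)),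
      ∀ w ∈ imSet φ φT X U (t + 1) (T - (t + 1)),
        w ≤ z → φ t a b w ≤ φ t a b z

/-- each representation map is strictly monotone in its third argument. -/
def StrictMonoRep {α β : Type*} (T : ℕ) (X : ℕ → Set α) (U : Set β)
    (φ : ℕ → α → β → ℝ → ℝ) (φT : α → ℝ) : Prop :=
  ∀ t, t < T → ∀ a ∈ X t, ∀ b ∈ U,
    ∀ z ∈ imSet φ φT X U (t + 1) (T - (t + 1)),
      ∀ w ∈ imSet φ φT X U (t + 1) (T - (t + 1)),
        w < z → φ t a b w < φ t a b z

/-- each representation map is upper semi-continuous in its third argument along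
monotonically decreasing sequences in the image of the next representation map. -/
def USCRep {α β : Type*} (T : ℕ) (X : ℕ → Set α) (U : Set β)
    (φ : ℕ → α → β → ℝ → ℝ) (φT : α → ℝ) : Prop :=
  ∀ t, t < T → ∀ a ∈ X t, ∀ b ∈ U, ∀ z : ℕ → ℝ,
    (∀ i, z i ∈ imSet φ φT X U (t + 1) (T - (t + 1))) →
    (∀ i, z (i + 1) ≤ z i) →
    ∀ L : ℝ, Tendsto z atTop (nhds L) →
      Tendsto (fun i => φ t a b (z i)) atTop (nhds (φ t a b L))

/-- each representation map has bounded image. -/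
def BddRep {α β : Type*} (T : ℕ) (X : ℕ → Set α) (U : Set β)
    (φ : ℕ → α → β → ℝ → ℝ) (φT : α → ℝ) : Prop :=
  ∀ t, t ≤ T → ∃ R, 0 < R ∧ ∀ z ∈ imSet φ φT X U t (T - t), |z| < R

/-- `GamSeq T f X U x0 s u x` says that the input sequence `(u s, …, u (T-1))`
belongs to `Γ_{x0,[s,T-1]}`, with `x` the corresponding state sequence:
`x s = x0`, `x (t+1) = f (x t) (u t) t`, `u t ∈ Γ_{x t, t}` for `s ≤ t ≤ T-1`. -/
def GamSeq {α β : Type*} (T : ℕ) (f : α → β → ℕ → α) (X : ℕ → Set α)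
    (U : Set β) (x0 : α) (s : ℕ) (u : ℕ → β) (x : ℕ → α) : Prop :=
  x s = x0 ∧ ∀ t, s ≤ t → t < T →
    u t ∈ U ∧ x (t + 1) = f (x t) (u t) t ∧ x (t + 1) ∈ X (t + 1)

/-- `(u,x)` is feasible for the MSOP with horizon `T` initialized at `x0` at time `0`. -/
def Feas {α β : Type*} (T : ℕ) (f : α → β → ℕ → α) (X : ℕ → Set α)
    (U : Set β) (x0 : α) (u : ℕ → β) (x : ℕ → α) : Prop :=
  x 0 = x0 ∧ (∀ t, t ≤ T → x t ∈ X t) ∧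
    ∀ t, t < T → u t ∈ U ∧ x (t + 1) = f (x t) (u t) t

/-- `(u,x)` is feasible for the MSOP with horizon `T` initialized at `x0` at time `s`. -/
def FeasFrom {α β : Type*} (T : ℕ) (f : α → β → ℕ → α) (X : ℕ → Set α)
    (U : Set β) (x0 : α) (s : ℕ) (u : ℕ → β) (x : ℕ → α) : Prop :=
  x s = x0 ∧ (∀ t, s ≤ t → t ≤ T → x t ∈ X t) ∧
    ∀ t, s ≤ t → t < T → u t ∈ U ∧ x (t + 1) = f (x t) (u t) t

/-!
A backward composition `J t = φ_t (x t, u t, J (t + 1))` makes the tail cost at time `t` a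
function of `x t`, `u t` and the tail cost at `t + 1` alone. Take `x 1 = h`, `x 2 = x 3 = m` and
`u 1 = 0`, `u 2 = 2 m`: the cost `-u 2 / 2` exactly cancels the running maximum `m`, so
`J 2 = 0` for both `m = 0` and `m = h / 2`, whereas `x 1 = h` dominates the maximum at time 1 and
gives `J 1 = h - m`. The two tails agree at time 1 in everything a representation map sees, yet
their costs differ.
-/

theorem nest_succ_congr {α β : Type*} {φ : ℕ → α → β → ℝ → ℝ} {φT : α → ℝ}
    {u u' : ℕ → β} {x x' : ℕ → α} {t k : ℕ} (hx : x t = x' t) (hu : u t = u' t)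
    (hnext : nest φ φT u x (t + 1) k = nest φ φT u' x' (t + 1) k) :
    nest φ φT u x t (k + 1) = nest φ φT u' x' t (k + 1) := by
  simp only [nest, hx, hu, hnext]

theorem tail_cost_eq_of_succ_eq {α β : Type*} {T : ℕ} {X : ℕ → Set α} {U : Set β}
    {J : ℕ → (ℕ → β) → (ℕ → α) → ℝ} {φ : ℕ → α → β → ℝ → ℝ} {φT : α → ℝ}
    (hrep : ∀ t0, t0 ≤ T → ∀ u x, (∀ t, t0 ≤ t → t < T → u t ∈ U) →
      (∀ t, t0 ≤ t → t ≤ T → x t ∈ X t) → J t0 u x = nest φ φT u x t0 (T - t0))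
    {t : ℕ} (ht : t < T) {u u' : ℕ → β} {x x' : ℕ → α}
    (hu_mem : ∀ s, t ≤ s → s < T → u s ∈ U) (hu'_mem : ∀ s, t ≤ s → s < T → u' s ∈ U)
    (hx_mem : ∀ s, t ≤ s → s ≤ T → x s ∈ X s) (hx'_mem : ∀ s, t ≤ s → s ≤ T → x' s ∈ X s)
    (hx : x t = x' t) (hu : u t = u' t) (hnext : J (t + 1) u x = J (t + 1) u' x') :
    J t u x = J t u' x' := by
  have hT : T - t = T - (t + 1) + 1 := by omega
  have hrep_succ : ∀ v y, (∀ s, t ≤ s → s < T → v s ∈ U) → (∀ s, t ≤ s → s ≤ T → y s ∈ X s) →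
      J (t + 1) v y = nest φ φT v y (t + 1) (T - (t + 1)) := fun v y hv hy =>
    hrep (t + 1) ht v y (fun s hs => hv s (by omega)) (fun s hs => hy s (by omega))
  rw [hrep t ht.le u x hu_mem hx_mem, hrep t ht.le u' x' hu'_mem hx'_mem, hT]
  exact nest_succ_congr hx hu <| by
    rw [← hrep_succ u x hu_mem hx_mem, ← hrep_succ u' x' hu'_mem hx'_mem, hnext]

theorem Finset.sup'_eq_of_mem_of_forall_le {ι α : Type*} [SemilatticeSup α] {s : Finset ι}
    (H : s.Nonempty) {f : ι → α} {i : ι} (hi : i ∈ s) (hle : ∀ j ∈ s, f j ≤ f i) :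
    s.sup' H f = f i :=
  le_antisymm (Finset.sup'_le H f hle) (Finset.le_sup' f hi)

theorem sum_plus_max_not_backward_separable_general
    (h : ℝ) (hh : 0 < h)
    (X : ℕ → Set ℝ) (hX : ∀ t, X t = Set.Icc 0 h)
    (U : Set ℝ) (hU : U = {-h, 0, h})
    (c : ℕ → ℝ → ℝ)
    (hc1 : ∀ v, c 1 v = v) (hc2 : ∀ v, c 2 v = -v / 2)
    (J : ℕ → (ℕ → ℝ) → (ℕ → ℝ) → ℝ)
    (hJ : ∀ t0 (ht0 : t0 ≤ 3), ∀ (u : ℕ → ℝ) (x : ℕ → ℝ), J t0 u x =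
      (∑ s ∈ Finset.Ico t0 3, c s (u s)) +
        (Finset.Icc t0 3).sup' (Finset.nonempty_Icc.mpr ht0) x) :
    ¬ ∃ (φ : ℕ → ℝ → ℝ → ℝ → ℝ) (φT : ℝ → ℝ),
        MonoRep 3 X U φ φT ∧
        ∀ t0, t0 ≤ 3 → ∀ (u : ℕ → ℝ) (x : ℕ → ℝ),
          (∀ t, t0 ≤ t → t < 3 → u t ∈ U) →
          (∀ t, t0 ≤ t → t ≤ 3 → x t ∈ X t) →
          J t0 u x = nest φ φT u x t0 (3 - t0) := by
  rintro ⟨φ, φT, -, hrep⟩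
  set u : ℝ → ℕ → ℝ := fun m t => if t = 2 then 2 * m else 0
  set x : ℝ → ℕ → ℝ := fun m t => if t = 1 then h else m
  have hJ2 (m : ℝ) : J 2 (u m) (x m) = 0 := by
    rw [hJ 2 (by norm_num), Finset.sup'_eq_of_forall _ _ (a := m)
      (fun j hj => if_neg (by rw [Finset.mem_Icc] at hj; omega))]
    simp only [Nat.Ico_succ_singleton, Finset.sum_singleton, ↓reduceIte, hc2, u]
    ring
  have hJ1 (m : ℝ) (hm : m ≤ h) : J 1 (u m) (x m) = h - m := by
    rw [hJ 1 (by norm_num), Finset.sup'_eq_of_mem_of_forall_le _ (i := 1) (by simp)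
      (by intro j _; by_cases hj : j = 1 <;> simp [x, hj, hm])]
    simp only [Nat.one_le_ofNat, Finset.sum_Ico_succ_top, Nat.Ico_succ_singleton,
      Finset.sum_singleton, OfNat.one_ne_ofNat, ↓reduceIte, hc1, hc2, zero_add, u, x]
    ring
  have hu_mem (m : ℝ) (hm : 2 * m ∈ U) (s : ℕ) : u m s ∈ U := by
    by_cases hs : s = 2
    · simpa [u, hs] using hm
    · simp [u, hs, hU]
  have hx_mem (m : ℝ) (hm : m ∈ Set.Icc 0 h) (s : ℕ) : x m s ∈ X s := by
    by_cases hs : s = 1 <;> simp [x, hs, hm, hX, hh.le]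
  have hU_h : 2 * (h / 2) ∈ U := by rw [hU, mul_div_cancel₀ _ two_ne_zero]; simp
  have hsep := tail_cost_eq_of_succ_eq hrep (t := 1) (by norm_num)
    (fun s _ _ => hu_mem 0 (by simp [hU]) s) (fun s _ _ => hu_mem (h / 2) hU_h s)
    (fun s _ _ => hx_mem 0 ⟨le_rfl, hh.le⟩ s)
    (fun s _ _ => hx_mem (h / 2) ⟨by linarith, by linarith⟩ s)
    rfl rfl (by rw [hJ2, hJ2])
  rw [hJ1 0 hh.le, hJ1 (h / 2) (by linarith)] at hsep
  linarith

/-- The family of tail costs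
`J_{t₀}(u,x) = Σ_{s ∈ [t₀,3)} c_s(u s) + max_{t₀ ≤ s ≤ 3} x s`, with
`c_0(v) = -v`, `c_1(v) = v`, `c_2(v) = -v/2`, on `X_t = [0,h]`, `U = {-h,0,h}`,
is not (as a nested family) monotonically backward separable: there exist no
representation maps `φ_t`, monotone in their third argument, whose backward
compositions realize every tail cost `J_{t₀}`. -/
theorem sum_plus_max_not_backward_separable
    (h : ℝ) (hh : 0 < h)
    (X : ℕ → Set ℝ) (hX : ∀ t, X t = Set.Icc 0 h)
    (U : Set ℝ) (hU : U = {-h, 0, h})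
    (c : ℕ → ℝ → ℝ)
    (hc0 : ∀ v, c 0 v = -v) (hc1 : ∀ v, c 1 v = v) (hc2 : ∀ v, c 2 v = -v / 2)
    (J : ℕ → (ℕ → ℝ) → (ℕ → ℝ) → ℝ)
    (hJ : ∀ t0 (ht0 : t0 ≤ 3), ∀ (u : ℕ → ℝ) (x : ℕ → ℝ), J t0 u x =
      (∑ s ∈ Finset.Ico t0 3, c s (u s)) +
        (Finset.Icc t0 3).sup' (Finset.nonempty_Icc.mpr ht0) x) :
    ¬ ∃ (φ : ℕ → ℝ → ℝ → ℝ → ℝ) (φT : ℝ → ℝ),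
        MonoRep 3 X U φ φT ∧
        ∀ t0, t0 ≤ 3 → ∀ (u : ℕ → ℝ) (x : ℕ → ℝ),
          (∀ t, t0 ≤ t → t < 3 → u t ∈ U) →
          (∀ t, t0 ≤ t → t ≤ 3 → x t ∈ X t) →
          J t0 u x = nest φ φT u x t0 (3 - t0) :=
  sum_plus_max_not_backward_separable_general h hh X hX U hU c hc1 hc2 J hJ
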